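/- Let k ≥ 2 and let T_k be the complete tripartite graph K_{a,b,c} with a = 2^k+1, b = 2^{k-1}(2^k+1), c = 2^{k-1}(2^k−1). The distance signless Laplacian matrix of T_k has eigenvalues: 2^{2k} + 2^{k+1} − 2 with multiplicity 2^k; 3·2^{2k-1} + 3·2^{k-1} − 3 with multiplicity b − 1; 3·2^{2k-1} + 2^{k-1} − 3 with multiplicity c − 1; together with the three eigenvalues of the 3×3 matrix 𝔇_P whose rows are [2^{2k}+2^{k+1}−2+2(2^k+1), b, c], [a, 3·2^{2k-1}+3·2^{k-1}−3+2^k(2^k+1), c], and [a, b, 3·2^{2k-1}+2^{k-1}−3+2^k(2^k−1)], each with multiplicity 1. -/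

import Mathlib

open Polynomial

/-- The part of a vertex of `Fin a ⊕ Fin b ⊕ Fin c`. -/
def tripart {a b c : ℕ} : Fin a ⊕ Fin b ⊕ Fin c → Fin 3
  | Sum.inl _ => 0
  | Sum.inr (Sum.inl _) => 1
  | Sum.inr (Sum.inr _) => 2

/-- The complete tripartite graph `K_{a,b,c}`. -/
def completeTripartiteGraph (a b c : ℕ) : SimpleGraph (Fin a ⊕ Fin b ⊕ Fin c) where
  Adj u v := tripart u ≠ tripart v
  symm := ⟨fun _ _ h => h.symm⟩
  loopless := ⟨fun _ h => h rfl⟩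

/-- The distance matrix of a graph. -/
noncomputable def distMatrix {V : Type*} [Fintype V] (G : SimpleGraph V) : Matrix V V ℝ :=
  Matrix.of fun u v => (G.dist u v : ℝ)

/-- The diagonal matrix of transmissions (sums of distances to all other vertices). -/
noncomputable def transMatrix {V : Type*} [Fintype V] [DecidableEq V] (G : SimpleGraph V) :
    Matrix V V ℝ :=
  Matrix.diagonal fun v => ∑ u, (G.dist v u : ℝ)

/-- The distance signless Laplacian matrix `D^Q = Tr + D`. -/
noncomputable def distSignlessLapMatrix {V : Type*} [Fintype V] [DecidableEq V]
    (G : SimpleGraph V) : Matrix V V ℝ :=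
  transMatrix G + distMatrix G

/-- The co-centralizer graph of `PSL(2, 2^k)`:
the complete tripartite graph `K_{2^k+1, 2^{k-1}(2^k+1), 2^{k-1}(2^k-1)}`. -/
def pslGraph (k : ℕ) :=
  completeTripartiteGraph (2 ^ k + 1) (2 ^ (k - 1) * (2 ^ k + 1)) (2 ^ (k - 1) * (2 ^ k - 1))

/-- The `3 × 3` quotient matrix `𝔇_P` describing the remaining three distance signless
Laplacian eigenvalues. -/
noncomputable def DP (k : ℕ) : Matrix (Fin 3) (Fin 3) ℝ :=
  !![(2 : ℝ) ^ (2 * k) + 2 ^ (k + 1) - 2 + 2 * (2 ^ k + 1),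
      2 ^ (k - 1) * (2 ^ k + 1), 2 ^ (k - 1) * (2 ^ k - 1);
    (2 : ℝ) ^ k + 1,
      3 * 2 ^ (2 * k - 1) + 3 * 2 ^ (k - 1) - 3 + 2 ^ k * (2 ^ k + 1),
      2 ^ (k - 1) * (2 ^ k - 1);
    (2 : ℝ) ^ k + 1, 2 ^ (k - 1) * (2 ^ k + 1),
      3 * 2 ^ (2 * k - 1) + 2 ^ (k - 1) - 3 + 2 ^ k * (2 ^ k - 1)]

/-!
The distance signless Laplacian of `K_{a,b,c}` is `diag (n + n_p - 4)` (where `n = a + b + c` and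
`n_p` is the size of the part of the vertex) plus the block-constant matrix with value `2` inside a
part and `1` between parts. For such a diagonal-plus-block-constant matrix the Weinstein–Aronszajn
identity `det (1 - A B) = det (1 - B A)` splits the characteristic polynomial into
`∏ p, (X - d_p) ^ (n_p - 1)` times the characteristic polynomial of the `3 × 3` quotient matrix,
which for `T_k` is `𝔇_P`. With `s = 2 ^ (k - 1)` the latter is an explicit cubic in `s`; it changes
sign on `4s² + 4s - 2 < 8s² - 3 < 10s² < 12s² + 8s`, so it has three simple roots, and it does not
vanish at the three other eigenvalues.
-/

open Matrix Finset

namespace Polynomial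

section IsDomain

variable {R : Type*} [CommRing R] [IsDomain R]

theorem rootMultiplicity_X_sub_C_pow_eq_ite [DecidableEq R] (a x : R) (n : ℕ) :
    ((X - C a) ^ n).rootMultiplicity x = if x = a then n else 0 := by
  split_ifs with h
  · rw [h, rootMultiplicity_X_sub_C_pow]
  · exact rootMultiplicity_eq_zero (by simp [sub_eq_zero, h])

theorem rootMultiplicity_three_X_sub_C_pow_mul [DecidableEq R] {p q : R[X]} {a b c : R}
    {i j l : ℕ} (hp : p ≠ 0) (h : p = (X - C a) ^ i * (X - C b) ^ j * (X - C c) ^ l * q) (x : R) :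
    p.rootMultiplicity x =
      (if x = a then i else 0) + (if x = b then j else 0) + (if x = c then l else 0) +
        q.rootMultiplicity x := by
  subst h
  rw [rootMultiplicity_mul hp, rootMultiplicity_mul (left_ne_zero_of_mul hp),
    rootMultiplicity_mul (left_ne_zero_of_mul (left_ne_zero_of_mul hp))]
  simp only [rootMultiplicity_X_sub_C_pow_eq_ite]

theorem rootMultiplicity_eq_one_of_natDegree_le_card {p : R[X]} (hp : p ≠ 0) {s : Finset R}
    (hs : ∀ x ∈ s, p.IsRoot x) (hdeg : p.natDegree ≤ #s) {x : R} (hx : p.IsRoot x) :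
    p.rootMultiplicity x = 1 := by
  classical
  have hle : s.val ≤ p.roots :=
    (Multiset.le_iff_subset s.nodup).2 fun y hy => (mem_roots hp).2 (hs y hy)
  have heq : s.val = p.roots := Multiset.eq_of_le_of_card_le hle ((card_roots' p).trans hdeg)
  rw [← count_roots, ← heq, Multiset.count_eq_one_of_mem s.nodup (heq ▸ (mem_roots hp).2 hx)]

end IsDomain

theorem exists_isRoot_mem_Ioo {p : ℝ[X]} {a b : ℝ} (hab : a ≤ b)
    (h : p.eval a * p.eval b < 0) : ∃ x ∈ Set.Ioo a b, p.IsRoot x := by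
  rcases mul_neg_iff.1 h with ⟨ha, hb⟩ | ⟨ha, hb⟩
  · exact intermediate_value_Ioo' hab p.continuous.continuousOn ⟨hb, ha⟩
  · exact intermediate_value_Ioo hab p.continuous.continuousOn ⟨ha, hb⟩

end Polynomial

namespace Matrix

variable {R K V ι : Type*}

lemma submatrix_eq_mul_mul_transpose [CommSemiring R] [Fintype ι] [DecidableEq ι] (π : V → ι)
    (W : Matrix ι ι R) :
    W.submatrix π π =
      (1 : Matrix ι ι R).submatrix π id * W * ((1 : Matrix ι ι R).submatrix π id)ᵀ := by
  ext u v
  simp [mul_apply, one_apply]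

lemma transpose_mul_diagonal_comp_mul [CommSemiring R] [Fintype V] [DecidableEq V]
    [DecidableEq ι] (π : V → ι) (f : ι → R) :
    ((1 : Matrix ι ι R).submatrix π id)ᵀ * diagonal (f ∘ π) * (1 : Matrix ι ι R).submatrix π id =
      diagonal fun p => f p * #{u | π u = p} := by
  ext p q
  rw [mul_apply, diagonal_apply]
  simp only [mul_diagonal, transpose_apply, submatrix_apply, one_apply, id, Function.comp_apply]
  split_ifs with h
  · subst h
    rw [Finset.sum_congr rfl fun u _ => show _ = if π u = p then f p else 0 by
      split_ifs <;> simp_all]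
    simp [Finset.sum_ite, mul_comm]
  · refine Finset.sum_eq_zero fun u _ => ?_
    split_ifs <;> simp_all

variable [Field K] [Fintype V] [DecidableEq V] [Fintype ι] [DecidableEq ι]

lemma det_diagonal_comp_sub_submatrix (π : V → ι) (W : Matrix ι ι K) {e : ι → K}
    (he : ∀ p, e p ≠ 0) :
    det (diagonal (e ∘ π) - W.submatrix π π) =
      (∏ p, e p ^ #{u | π u = p}) * det (1 - W * diagonal fun p => #{u | π u = p} / e p) := by
  set U := (1 : Matrix ι ι K).submatrix π id
  have hinv : (fun u => (e ∘ π) u * (e⁻¹ ∘ π) u) = fun _ => 1 := funext fun u => by simp [he]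
  have hfac : diagonal (e ∘ π) - W.submatrix π π =
      diagonal (e ∘ π) * (1 - diagonal (e⁻¹ ∘ π) * U * (W * Uᵀ)) := by
    rw [Matrix.mul_sub, Matrix.mul_one, Matrix.mul_assoc _ U, ← Matrix.mul_assoc (diagonal _),
      diagonal_mul_diagonal, hinv, diagonal_one, Matrix.one_mul, ← Matrix.mul_assoc,
      submatrix_eq_mul_mul_transpose]
  rw [hfac, det_mul, det_diagonal, det_one_sub_mul_comm, Matrix.mul_assoc, ← Matrix.mul_assoc Uᵀ,
    transpose_mul_diagonal_comp_mul]
  simp only [Function.comp_apply]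
  rw [← Finset.prod_fiberwise' univ π e]
  simp [div_eq_inv_mul]

lemma det_diagonal_sub_mul_diagonal (W : Matrix ι ι K) (n : ι → K) {e : ι → K}
    (he : ∀ p, e p ≠ 0) :
    det (diagonal e - W * diagonal n) = det (1 - W * diagonal fun p => n p / e p) * ∏ p, e p := by
  rw [← det_diagonal, ← det_mul, Matrix.sub_mul, Matrix.one_mul, Matrix.mul_assoc,
    diagonal_mul_diagonal]
  congr
  ext p
  simp [he]

theorem charpoly_diagonal_comp_add_submatrix [Infinite K] {π : V → ι} (hπ : Function.Surjective π)
    (d : ι → K) (W : Matrix ι ι K) :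
    (diagonal (d ∘ π) + W.submatrix π π).charpoly =
      (∏ p, (X - C (d p)) ^ (#{u | π u = p} - 1)) *
        (diagonal d + W * diagonal fun p => (#{u | π u = p} : K)).charpoly := by
  -- After multiplying by `∏ p, (X - C (d p))` both sides can be compared at the infinitely many
  -- points `x` at which every `x - d p` is invertible.
  have key : (diagonal (d ∘ π) + W.submatrix π π).charpoly * ∏ p, (X - C (d p)) =
      (∏ p, (X - C (d p)) ^ #{u | π u = p}) *
        (diagonal d + W * diagonal fun p => (#{u | π u = p} : K)).charpoly := by
    refine eq_of_infinite_eval_eq _ _ ((Set.finite_range d).infinite_compl.mono fun x hx => ?_)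
    have he : ∀ p, x - d p ≠ 0 := fun p h => hx ⟨p, (sub_eq_zero.1 h).symm⟩
    have h := det_diagonal_comp_sub_submatrix π W he
    simp only [Function.comp_def] at h
    simp only [Set.mem_ofPred_eq, eval_mul, eval_prod, eval_pow, eval_sub, eval_X, eval_C,
      eval_charpoly, scalar_apply, ← sub_sub, diagonal_sub, Function.comp_def]
    rw [h, det_diagonal_sub_mul_diagonal W _ he]
    ring
  have hsplit : ∏ p, (X - C (d p)) ^ #{u | π u = p} =
      (∏ p, (X - C (d p)) ^ (#{u | π u = p} - 1)) * ∏ p, (X - C (d p)) := by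
    rw [← prod_mul_distrib]
    refine prod_congr rfl fun p _ => ?_
    obtain ⟨u, rfl⟩ := hπ p
    rw [← pow_succ, Nat.sub_add_cancel (card_pos.2 ⟨u, by simp⟩)]
  refine mul_right_cancel₀ (b := ∏ p, (X - C (d p)))
    (prod_ne_zero_iff.2 fun p _ => X_sub_C_ne_zero (d p)) ?_
  rw [key, hsplit]
  ring

end Matrix

section CompleteTripartite

variable {a b c : ℕ}

lemma card_filter_tripart (p : Fin 3) :
    #{u : Fin a ⊕ Fin b ⊕ Fin c | tripart u = p} = ![a, b, c] p := by
  rw [Finset.card_filter, Fintype.sum_sum_type, Fintype.sum_sum_type]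
  fin_cases p <;> simp [tripart]

lemma tripart_surjective (ha : 0 < a) (hb : 0 < b) (hc : 0 < c) :
    Function.Surjective (tripart : Fin a ⊕ Fin b ⊕ Fin c → Fin 3) := by
  intro p
  fin_cases p
  exacts [⟨.inl ⟨0, ha⟩, rfl⟩, ⟨.inr (.inl ⟨0, hb⟩), rfl⟩, ⟨.inr (.inr ⟨0, hc⟩), rfl⟩]

lemma dist_completeTripartiteGraph (ha : 0 < a) (hb : 0 < b) (hc : 0 < c)
    (u v : Fin a ⊕ Fin b ⊕ Fin c) :
    (completeTripartiteGraph a b c).dist u v =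
      if u = v then 0 else if tripart u = tripart v then 2 else 1 := by
  split_ifs with huv hp
  · simp [huv]
  · obtain ⟨w, hw⟩ := tripart_surjective ha hb hc (tripart u + 1)
    have hwu : tripart u ≠ tripart w := by
      rw [hw]
      generalize tripart u = p
      fin_cases p <;> decide
    have hcommon : w ∈ (completeTripartiteGraph a b c).commonNeighbors u v :=
      ⟨hwu, show tripart v ≠ tripart w from hp ▸ hwu⟩
    rw [SimpleGraph.dist, SimpleGraph.edist_eq_two_iff.2 ⟨huv, not_not.2 hp, w, hcommon⟩]
    rfl
  · exact SimpleGraph.dist_eq_one_iff_adj.2 hp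

lemma sum_dist_completeTripartiteGraph (ha : 0 < a) (hb : 0 < b) (hc : 0 < c)
    (v : Fin a ⊕ Fin b ⊕ Fin c) :
    ∑ u, ((completeTripartiteGraph a b c).dist v u : ℝ) =
      a + b + c + ![a, b, c] (tripart v) - 2 := by
  have h : ∀ u, ((completeTripartiteGraph a b c).dist v u : ℝ) =
      1 + (if tripart u = tripart v then 1 else 0) - if v = u then 2 else 0 := by
    intro u
    rw [dist_completeTripartiteGraph ha hb hc]
    rcases eq_or_ne v u with rfl | huv
    · norm_num
    · simp only [huv, if_false, eq_comm (a := tripart v)]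
      split_ifs <;> norm_num
  simp only [h, sum_sub_distrib, sum_add_distrib, sum_boole, card_filter_tripart, sum_ite_eq]
  simp
  ring

lemma distSignlessLapMatrix_completeTripartiteGraph (ha : 0 < a) (hb : 0 < b) (hc : 0 < c) :
    distSignlessLapMatrix (completeTripartiteGraph a b c) =
      diagonal ((fun p => (a + b + c + ![a, b, c] p : ℝ) - 4) ∘ tripart) +
        (of fun p q : Fin 3 => if p = q then (2 : ℝ) else 1).submatrix tripart tripart := by
  ext u v
  simp only [distSignlessLapMatrix, transMatrix, distMatrix, Matrix.add_apply, diagonal_apply,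
    of_apply, submatrix_apply, sum_dist_completeTripartiteGraph ha hb hc, Function.comp_apply]
  rw [dist_completeTripartiteGraph ha hb hc]
  rcases eq_or_ne u v with rfl | huv
  · simp only [if_true, Nat.cast_zero]
    ring
  · simp only [huv, if_false, zero_add]
    split_ifs <;> norm_num

theorem charpoly_distSignlessLapMatrix_completeTripartiteGraph (ha : 0 < a) (hb : 0 < b)
    (hc : 0 < c) :
    (distSignlessLapMatrix (completeTripartiteGraph a b c)).charpoly =
      (X - C ((a + b + c : ℝ) + a - 4)) ^ (a - 1) * (X - C ((a + b + c : ℝ) + b - 4)) ^ (b - 1) *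
        (X - C ((a + b + c : ℝ) + c - 4)) ^ (c - 1) *
        !![(a + b + c : ℝ) + 3 * a - 4, b, c;
          a, (a + b + c : ℝ) + 3 * b - 4, c;
          a, b, (a + b + c : ℝ) + 3 * c - 4].charpoly := by
  rw [distSignlessLapMatrix_completeTripartiteGraph ha hb hc,
    charpoly_diagonal_comp_add_submatrix (tripart_surjective ha hb hc)]
  simp only [card_filter_tripart, Fin.prod_univ_three]
  congr 2
  ext p q
  fin_cases p <;> fin_cases q <;> simp <;> ring

end CompleteTripartite

lemma charpoly_distSignlessLapMatrix_pslGraph {k : ℕ} (hk : 1 ≤ k) :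
    (distSignlessLapMatrix (pslGraph k)).charpoly =
      (X - C ((2 : ℝ) ^ (2 * k) + 2 ^ (k + 1) - 2)) ^ (2 ^ k) *
        (X - C (3 * (2 : ℝ) ^ (2 * k - 1) + 3 * 2 ^ (k - 1) - 3)) ^
          (2 ^ (k - 1) * (2 ^ k + 1) - 1) *
        (X - C (3 * (2 : ℝ) ^ (2 * k - 1) + 2 ^ (k - 1) - 3)) ^
          (2 ^ (k - 1) * (2 ^ k - 1) - 1) *
        (DP k).charpoly := by
  have h1 : 1 ≤ 2 ^ k := Nat.one_le_two_pow
  have hc : 0 < 2 ^ (k - 1) * (2 ^ k - 1) :=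
    Nat.mul_pos (by positivity) (Nat.sub_pos_of_lt (Nat.one_lt_two_pow (by omega)))
  rw [pslGraph, charpoly_distSignlessLapMatrix_completeTripartiteGraph (by positivity)
    (by positivity) hc, Nat.add_sub_cancel]
  push_cast [h1]
  obtain ⟨m, rfl⟩ : ∃ m, k = m + 1 := ⟨k - 1, by omega⟩
  simp only [Nat.add_sub_cancel, show 2 * (m + 1) - 1 = 2 * m + 1 by omega]
  refine congr_arg₂ (· * ·) (congr_arg₂ (· * ·) (congr_arg₂ (· * ·) ?_ ?_) ?_)
    (congrArg charpoly ?_)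
  · congr 3
    ring
  · congr 3
    ring
  · congr 3
    ring
  ext p q
  fin_cases p <;> fin_cases q <;> simp [DP, show 2 * (m + 1) - 1 = 2 * m + 1 by omega] <;> ring

lemma eval_charpoly_DP {m : ℕ} {s : ℝ} (hs : 2 ^ m = s) (x : ℝ) :
    (DP (m + 1)).charpoly.eval x =
      x ^ 3 - (24 * s ^ 2 + 12 * s - 6) * x ^ 2 +
        (176 * s ^ 4 + 208 * s ^ 3 - 60 * s ^ 2 - 60 * s + 9) * x -
        (384 * s ^ 6 + 864 * s ^ 5 + 16 * s ^ 4 - 536 * s ^ 3 - 44 * s ^ 2 + 72 * s) := by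
  subst hs
  rw [eval_charpoly, det_fin_three]
  simp [DP, show 2 * (m + 1) - 1 = 2 * m + 1 by omega]
  ring

lemma eval_charpoly_DP_neg {m : ℕ} (hm : 1 ≤ m) {s : ℝ} (hs : 2 ^ m = s) :
    (DP (m + 1)).charpoly.eval (4 * s ^ 2 + 4 * s - 2) < 0 := by
  have hs2 : 2 ≤ s := hs ▸ le_self_pow₀ one_le_two (by omega)
  rw [eval_charpoly_DP hs]
  nlinarith [mul_nonneg (by linarith : 0 ≤ s - 2) (pow_pos (by linarith : 0 < s) 4).le,
    pow_pos (by linarith : 0 < s) 3, pow_pos (by linarith : 0 < s) 4]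

lemma not_isRoot_charpoly_DP {m : ℕ} (hm : 1 ≤ m) {s : ℝ} (hs : 2 ^ m = s) :
    ¬ (DP (m + 1)).charpoly.IsRoot (4 * s ^ 2 + 4 * s - 2) ∧
    ¬ (DP (m + 1)).charpoly.IsRoot (6 * s ^ 2 + 3 * s - 3) ∧
    ¬ (DP (m + 1)).charpoly.IsRoot (6 * s ^ 2 + s - 3) := by
  refine ⟨(eval_charpoly_DP_neg hm hs).ne, ?_⟩
  -- Both remaining values, as polynomials in `s`, have a real zero in `(2, 4)`.
  have hs' : s = 2 ∨ 4 ≤ s := by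
    subst hs
    rcases hm.eq_or_lt with rfl | h
    · exact .inl (pow_one 2)
    · exact .inr (le_trans (by norm_num) (pow_le_pow_right₀ (one_le_two : (1 : ℝ) ≤ 2) h))
  simp only [IsRoot.def, eval_charpoly_DP hs]
  rcases hs' with rfl | h4
  · norm_num
  · have hd : ∀ n, 0 ≤ (s - 4) * s ^ n := fun n => mul_nonneg (by linarith) (by positivity)
    have h0 : 0 < s := by linarith
    constructor <;> nlinarith [hd 4, hd 5, pow_pos h0 3, pow_pos h0 4]

theorem rootMultiplicity_charpoly_DP_eq_one {m : ℕ} (hm : 1 ≤ m) {s : ℝ} (hs : 2 ^ m = s)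
    {μ : ℝ} (hμ : (DP (m + 1)).charpoly.IsRoot μ) :
    (DP (m + 1)).charpoly.rootMultiplicity μ = 1 := by
  have hs2 : 2 ≤ s := hs ▸ le_self_pow₀ one_le_two (by omega)
  have hd : ∀ n, 0 ≤ (s - 2) * s ^ n := fun n => mul_nonneg (by linarith) (by positivity)
  have h0 : 0 < s := by linarith
  have hq := eval_charpoly_DP hs
  have e₁ := eval_charpoly_DP_neg hm hs
  have e₂ : 0 < (DP (m + 1)).charpoly.eval (8 * s ^ 2 - 3) := by
    rw [hq]
    nlinarith [hd 4, pow_pos h0 3, pow_pos h0 4]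
  have e₃ : (DP (m + 1)).charpoly.eval (10 * s ^ 2) < 0 := by
    rw [hq]
    nlinarith [hd 1, hd 4, hd 5, pow_pos h0 3, pow_pos h0 4]
  have e₄ : 0 < (DP (m + 1)).charpoly.eval (12 * s ^ 2 + 8 * s) := by
    rw [hq]
    nlinarith [pow_pos h0 2, pow_pos h0 3, pow_pos h0 4, pow_pos h0 5]
  obtain ⟨x₁, hx₁, hr₁⟩ := exists_isRoot_mem_Ioo (by nlinarith) (mul_neg_of_neg_of_pos e₁ e₂)
  obtain ⟨x₂, hx₂, hr₂⟩ := exists_isRoot_mem_Ioo (by nlinarith) (mul_neg_of_pos_of_neg e₂ e₃)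
  obtain ⟨x₃, hx₃, hr₃⟩ := exists_isRoot_mem_Ioo (by nlinarith) (mul_neg_of_neg_of_pos e₃ e₄)
  refine rootMultiplicity_eq_one_of_natDegree_le_card (charpoly_monic _).ne_zero
    (s := {x₁, x₂, x₃}) ?_ ?_ hμ
  · simp only [mem_insert, mem_singleton]
    rintro x (rfl | rfl | rfl) <;> assumption
  rw [charpoly_natDegree_eq_dim, Fintype.card_fin, card_eq_three.2 ⟨x₁, x₂, x₃, ?_, ?_, ?_, rfl⟩]
  all_goals
    simp only [Set.mem_Ioo] at hx₁ hx₂ hx₃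
    linarith

lemma pslEigenvalues_eq {m : ℕ} {s : ℝ} (hs : 2 ^ m = s) :
    (2 : ℝ) ^ (2 * (m + 1)) + 2 ^ (m + 1 + 1) - 2 = 4 * s ^ 2 + 4 * s - 2 ∧
    3 * (2 : ℝ) ^ (2 * (m + 1) - 1) + 3 * 2 ^ (m + 1 - 1) - 3 = 6 * s ^ 2 + 3 * s - 3 ∧
    3 * (2 : ℝ) ^ (2 * (m + 1) - 1) + 2 ^ (m + 1 - 1) - 3 = 6 * s ^ 2 + s - 3 := by
  subst hs
  simp only [Nat.add_sub_cancel, show 2 * (m + 1) - 1 = 2 * m + 1 by omega]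
  refine ⟨?_, ?_, ?_⟩ <;> ring

theorem psl_cocentralizer_distance_signless_laplacian_spectrum (k : ℕ) (hk : 2 ≤ k) :
    (distSignlessLapMatrix (pslGraph k)).charpoly.rootMultiplicity
      ((2 : ℝ) ^ (2 * k) + 2 ^ (k + 1) - 2) = 2 ^ k ∧
    (distSignlessLapMatrix (pslGraph k)).charpoly.rootMultiplicity
      (3 * (2 : ℝ) ^ (2 * k - 1) + 3 * 2 ^ (k - 1) - 3) = 2 ^ (k - 1) * (2 ^ k + 1) - 1 ∧
    (distSignlessLapMatrix (pslGraph k)).charpoly.rootMultiplicity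
      (3 * (2 : ℝ) ^ (2 * k - 1) + 2 ^ (k - 1) - 3) = 2 ^ (k - 1) * (2 ^ k - 1) - 1 ∧
    (distSignlessLapMatrix (pslGraph k)).charpoly =
      (X - C ((2 : ℝ) ^ (2 * k) + 2 ^ (k + 1) - 2)) ^ (2 ^ k) *
        (X - C (3 * (2 : ℝ) ^ (2 * k - 1) + 3 * 2 ^ (k - 1) - 3)) ^
          (2 ^ (k - 1) * (2 ^ k + 1) - 1) *
        (X - C (3 * (2 : ℝ) ^ (2 * k - 1) + 2 ^ (k - 1) - 3)) ^
          (2 ^ (k - 1) * (2 ^ k - 1) - 1) *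
        (DP k).charpoly ∧
    ∀ μ : ℝ, (DP k).charpoly.IsRoot μ →
      (distSignlessLapMatrix (pslGraph k)).charpoly.rootMultiplicity μ = 1 := by
  obtain ⟨m, rfl⟩ : ∃ m, k = m + 1 := ⟨k - 1, by omega⟩
  have hm : 1 ≤ m := by omega
  obtain ⟨s, hs⟩ : ∃ s : ℝ, 2 ^ m = s := ⟨_, rfl⟩
  have hs2 : 2 ≤ s := hs ▸ le_self_pow₀ one_le_two (by omega)
  have hfact := charpoly_distSignlessLapMatrix_pslGraph (k := m + 1) (by omega)
  obtain ⟨e₁, e₂, e₃⟩ := pslEigenvalues_eq hs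
  rw [e₁, e₂, e₃] at hfact ⊢
  have h₁₃ : 4 * s ^ 2 + 4 * s - 2 < 6 * s ^ 2 + s - 3 := by nlinarith
  have h₃₂ : 6 * s ^ 2 + s - 3 < 6 * s ^ 2 + 3 * s - 3 := by linarith
  obtain ⟨hq₁, hq₂, hq₃⟩ := not_isRoot_charpoly_DP hm hs
  have hmult := rootMultiplicity_three_X_sub_C_pow_mul (charpoly_monic _).ne_zero hfact
  refine ⟨?_, ?_, ?_, hfact, fun μ hμ => ?_⟩
  · simp [hmult, h₁₃.ne, (h₁₃.trans h₃₂).ne, rootMultiplicity_eq_zero hq₁]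
  · simp [hmult, h₃₂.ne', (h₁₃.trans h₃₂).ne', rootMultiplicity_eq_zero hq₂]
  · simp [hmult, h₁₃.ne', h₃₂.ne, rootMultiplicity_eq_zero hq₃]
  · have hne {x : ℝ} (hx : ¬ (DP (m + 1)).charpoly.IsRoot x) : μ ≠ x := fun h => hx (h ▸ hμ)
    rw [hmult, rootMultiplicity_charpoly_DP_eq_one hm hs hμ, if_neg (hne hq₁), if_neg (hne hq₂),
      if_neg (hne hq₃)]
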